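/- arXiv:cs/0105034 — 8 statements merged into one kernel-verified Lean document; each statement's English description precedes it below -/
import Mathlib

section
/- For all integers i with 0 < i < N, where N = 2^n, and all k with 1 ≤ k ≤ n, we have f(i,k) = f(N-i,k), where f(i,k) = (i * (1 - 2 * (⌊(i-1)/2^(k-1)⌋ mod 2))) mod 2^k. -/
/-- Number of dimension-`k` links crossing intercolumn position `i`
(least nonnegative residue mod `2^k`). -/
def f (i : ℤ) (k : ℕ) : ℤ := (i * (1 - 2 * (((i - 1) / 2 ^ (k - 1)) % 2))) % 2 ^ k

/-- Total wire density at intercolumn position `i` for `N = 2^n`. -/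
def S (i : ℤ) (n : ℕ) : ℤ := ∑ k ∈ Finset.Icc 1 n, f i k

/-- The `j`-th binary digit of `i`, counting from 1 at the right. -/
def b (i : ℤ) (j : ℕ) : ℤ := (i / 2 ^ (j - 1)) % 2

/-- Excess of 1's over 0's among bit positions `j+1, ..., n` of `i`. -/
def e (i : ℤ) (j n : ℕ) : ℤ := ∑ l ∈ Finset.Icc (j + 1) n, (2 * b i l - 1)

/-- Maximum wire density `m(N)` for `N = 2^n`. -/
def m (n : ℕ) : ℤ := (4 * 2 ^ n - (-1) ^ n - 3) / 6

/-- Leftmost maximizing position `p(N)` for `N = 2^n`. -/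
def p (n : ℕ) : ℤ := (2 ^ n - (-1) ^ n) / 3

theorem f_symmetry (n : ℕ) (hn : 1 ≤ n) (i : ℤ) (hi0 : 0 < i) (hiN : i < 2 ^ n)
    (k : ℕ) (hk1 : 1 ≤ k) (hkn : k ≤ n) :
    f i k = f (2 ^ n - i) k := by
  unfold f
  set d : ℤ := 2 ^ (k - 1) with hd
  have hd0 : (0:ℤ) < d := by positivity
  have h2d : (2:ℤ) ^ k = 2 * d := by
    rw [hd, ← pow_succ']
    congr 1
    omega
  set s : ℤ := (i - 1) / d % 2 with hs
  set t : ℤ := (2 ^ n - i - 1) / d % 2 with ht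
  have hMdef : (2:ℤ) ^ n = d * 2 ^ (n - k + 1) := by
    rw [hd, ← pow_add]
    congr 1
    omega
  set M : ℤ := 2 ^ (n - k + 1) with hM
  have hMeven : (2:ℤ) ∣ M := dvd_pow_self 2 (by omega)
  have key : (2:ℤ) ^ k ∣ 2 * i * (1 - t - s) := by
    by_cases hdvd : d ∣ i
    · obtain ⟨c, hc⟩ := hdvd
      exact ⟨c * (1 - t - s), by rw [h2d, hc]; ring⟩
    · have hd1 : (1:ℤ) < d := by
        by_contra h
        push_neg at h
        have hde : d = 1 := by omega
        exact hdvd (hde ▸ one_dvd i)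
      set q : ℤ := (i - 1) / d with hq
      have hiq : d * q + (i - 1) % d = i - 1 := Int.mul_ediv_add_emod _ _
      have hr0 : 0 ≤ (i - 1) % d := Int.emod_nonneg _ (ne_of_gt hd0)
      have hrd : (i - 1) % d < d := Int.emod_lt_of_pos _ hd0
      set r : ℤ := (i - 1) % d with hr
      have hr1 : r + 1 < d := by
        by_contra h
        push_neg at h
        refine hdvd ⟨q + 1, ?_⟩
        have hexp : d * (q + 1) = d * q + d := by ring
        linarith
      have hsplit : 2 ^ n - i - 1 = (d - r - 2) + d * (M - q - 1) := by
        have h1 : d * (M - q - 1) = d * M - d * q - d := by ring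
        linarith [hMdef]
      have ht2 : (2 ^ n - i - 1) / d = M - q - 1 := by
        rw [hsplit, Int.add_mul_ediv_left _ _ (ne_of_gt hd0),
          Int.ediv_eq_zero_of_lt (by omega) (by omega), zero_add]
      refine ⟨i * (1 - t - s), ?_⟩
      have hz : 1 - t - s = 0 := by
        rw [ht, ht2, hs]
        omega
      rw [hz]
      ring
  have hdiff : (2:ℤ) ^ k ∣ (2 ^ n - i) * (1 - 2 * t) - i * (1 - 2 * s) := by
    have hnk : (2:ℤ) ^ n = 2 ^ k * 2 ^ (n - k) := by
      rw [← pow_add]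
      congr 1
      omega
    obtain ⟨c, hc⟩ := key
    refine ⟨2 ^ (n - k) * (1 - 2 * t) - c, ?_⟩
    linear_combination (1 - 2 * t) * hnk - hc
  exact Int.modEq_iff_dvd.mpr hdiff
end

section
/- For all integers i with 0 < i < N, where N = 2^n, we have S(i,N) = S(N-i,N), where S(i,N) = Σ_{k=1}^{n} f(i,k). -/
/-!
Each summand `f i k` depends only on `i` modulo `2 ^ k`, and it is even in `i`: with `h = 2 ^ (k - 1)`,
the sign `1 - 2 * ((i - 1) / h % 2)` flips under `i ↦ -i` unless `h ∣ i`, and in that case `2 i ≡ 0`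
modulo `2 h`. Since `2 ^ n - i ≡ -i` modulo every `2 ^ k` with `k ≤ n`, the two sums agree term by term.
-/

lemma f_add_mul_two_pow (i c : ℤ) (k : ℕ) : f (i + c * 2 ^ k) k = f i k := by
  cases k with
  | zero => simp [f]
  | succ j =>
    simp only [f, Nat.add_sub_cancel, pow_succ]
    rw [show i + c * (2 ^ j * 2) - 1 = i - 1 + (2 * c) * 2 ^ j by ring,
      Int.add_mul_ediv_right _ _ (by positivity), Int.add_mul_emod_self_left,
      add_mul, mul_right_comm c, Int.add_mul_emod_self_right]

lemma f_neg (i : ℤ) (k : ℕ) : f (-i) k = f i k := by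
  cases k with
  | zero => simp [f]
  | succ j =>
    simp only [f, Nat.add_sub_cancel, pow_succ]
    set h : ℤ := 2 ^ j
    have hh : 0 < h := by positivity
    obtain ⟨q, r, hr0, hrh, rfl⟩ : ∃ q r, 0 ≤ r ∧ r < h ∧ i = q * h + r :=
      ⟨i / h, i % h, Int.emod_nonneg i hh.ne', Int.emod_lt_of_pos i hh,
        (Int.ediv_mul_add_emod i h).symm⟩
    rcases hr0.eq_or_lt with rfl | hr
    · simp only [add_zero]
      have hq : (q * h - 1) / h = q - 1 := by
        rw [Int.ediv_eq_iff_of_pos hh]; constructor <;> linarith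
      have hq' : (-(q * h) - 1) / h = -q - 1 := by
        rw [Int.ediv_eq_iff_of_pos hh]; constructor <;> linarith
      have hpar : (-q - 1) % 2 = (q - 1) % 2 := by omega
      rw [hq, hq', hpar, show -(q * h) * (1 - 2 * ((q - 1) % 2))
        = q * h * (1 - 2 * ((q - 1) % 2)) + (-q * (1 - 2 * ((q - 1) % 2))) * (h * 2) by ring,
        Int.add_mul_emod_self_right]
    · have hq : (q * h + r - 1) / h = q := by
        rw [Int.ediv_eq_iff_of_pos hh]; constructor <;> linarith
      have hq' : (-(q * h + r) - 1) / h = -q - 1 := by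
        rw [Int.ediv_eq_iff_of_pos hh]; constructor <;> linarith
      have hpar : (-q - 1) % 2 = 1 - q % 2 := by omega
      rw [hq, hq', hpar]
      congr 1
      ring

theorem S_symmetry_general (n : ℕ) (i : ℤ) :
    S i n = S (2 ^ n - i) n := by
  refine Finset.sum_congr rfl fun k hk => ?_
  obtain ⟨c, hc⟩ : (2 : ℤ) ^ k ∣ 2 ^ n := pow_dvd_pow 2 (Finset.mem_Icc.mp hk).2
  rw [hc, show 2 ^ k * c - i = -i + c * 2 ^ k by ring, f_add_mul_two_pow, f_neg]

theorem S_symmetry (n : ℕ) (hn : 1 ≤ n) (i : ℤ) (hi0 : 0 < i) (hiN : i < 2 ^ n) :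
    S i n = S (2 ^ n - i) n :=
  S_symmetry_general n i
end

section
/- For N = 2^n with n ≥ 1, let p(N) = (N - (-1)^n)/3 and m(N) = (4N - (-1)^n - 3)/6. Then S(p(N), N) = m(N). -/
def P : ℕ → ℤ
  | 0 => 0
  | n + 1 => 2 * P n + (-1) ^ n

lemma hP : ∀ n, 3 * P n = 2 ^ n - (-1) ^ n := by
  intro n
  induction n with
  | zero => simp [P]
  | succ k ih =>
    show 3 * (2 * P k + (-1)^k) = 2 ^ (k+1) - (-1) ^ (k+1)
    rw [pow_succ, pow_succ]
    linarith

lemma p_eq (n : ℕ) : p n = P n := by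
  unfold p; rw [← hP n, Int.mul_ediv_cancel_left _ (by norm_num)]

lemma P_pos {n : ℕ} (hn : 1 ≤ n) : 1 ≤ P n := by
  have h := hP n
  have h2 : (2:ℤ)^1 ≤ 2 ^ n := pow_le_pow_right₀ (by norm_num) hn
  have h3 : (-1:ℤ)^n = 1 ∨ (-1:ℤ)^n = -1 := by
    rcases Nat.even_or_odd n with h | h
    · left; exact h.neg_one_pow
    · right; exact h.neg_one_pow
  norm_num at h2
  omega

lemma two_pow_pos (j : ℕ) : (1:ℤ) ≤ 2 ^ j := by
  have := pow_pos (show (0:ℤ) < 2 by norm_num) j; omega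

lemma P_le {j : ℕ} : P (j + 1) ≤ 2 ^ j := by
  have h := hP (j + 1)
  rw [pow_succ] at h
  have h3 : (-1:ℤ)^(j+1) = 1 ∨ (-1:ℤ)^(j+1) = -1 := by
    rcases Nat.even_or_odd (j+1) with h | h
    · left; exact h.neg_one_pow
    · right; exact h.neg_one_pow
  have := two_pow_pos j
  omega

lemma P_lt {j : ℕ} : P (j + 2) < 2 ^ (j + 1) := by
  have h := hP (j + 2)
  rw [pow_succ, pow_succ] at h
  have h3 : (-1:ℤ)^(j+2) = 1 ∨ (-1:ℤ)^(j+2) = -1 := by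
    rcases Nat.even_or_odd (j+2) with h | h
    · left; exact h.neg_one_pow
    · right; exact h.neg_one_pow
  have := two_pow_pos j
  rw [pow_succ]
  omega

lemma P_lt_pow {k : ℕ} : P k < 2 ^ k := by
  cases k with
  | zero => simp [P]
  | succ j =>
    have := @P_le j
    have := two_pow_pos j
    rw [pow_succ]
    omega

lemma P_split {k n : ℕ} (hkn : k ≤ n) :
    P n = (-1) ^ (n - k) * P k + 2 ^ k * P (n - k) := by
  have h2 : (2:ℤ) ^ n = 2 ^ k * 2 ^ (n - k) := by
    rw [← pow_add, Nat.add_sub_cancel' hkn]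
  have hneg : ((-1:ℤ)) ^ n = (-1) ^ k * (-1) ^ (n - k) := by
    rw [← pow_add, Nat.add_sub_cancel' hkn]
  have h : 3 * P n = 3 * ((-1) ^ (n - k) * P k + 2 ^ k * P (n - k)) := by
    linear_combination hP n - (-1:ℤ)^(n-k) * hP k - (2:ℤ)^k * hP (n-k) + h2 - hneg
  exact mul_left_cancel₀ (by norm_num) h

lemma P_odd {n : ℕ} (hn : 1 ≤ n) : P n % 2 = 1 := by
  obtain ⟨j, rfl⟩ : ∃ j, n = j + 1 := ⟨n - 1, by omega⟩
  show (2 * P j + (-1)^j) % 2 = 1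
  have h3 : (-1:ℤ)^j = 1 ∨ (-1:ℤ)^j = -1 := by
    rcases Nat.even_or_odd j with h | h
    · left; exact h.neg_one_pow
    · right; exact h.neg_one_pow
  omega

lemma f_one {n : ℕ} (hn : 1 ≤ n) : f (P n) 1 = 1 := by
  have h := P_odd hn
  unfold f
  simp only [Nat.sub_self, pow_zero, Int.ediv_one, pow_one]
  rw [show (P n - 1) % 2 = 0 by omega, mul_zero, sub_zero, mul_one]
  omega

lemma f_P {k n : ℕ} (hk : 1 ≤ k) (hkn : k ≤ n) : f (P n) k = P k := by
  obtain ⟨j, rfl⟩ : ∃ j, k = j + 1 := ⟨k - 1, by omega⟩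
  rcases Nat.even_or_odd (n - (j + 1)) with hev | hodd
  · -- even case: P n ≡ P k  mod 2^k, bit is 0
    have hsplit : P n = P (j+1) + 2 ^ (j+1) * P (n - (j+1)) := by
      have := P_split hkn
      rwa [hev.neg_one_pow, one_mul] at this
    set r := P (j+1) with hr
    set q := P (n - (j+1)) with hq
    have hr1 : 1 ≤ r := P_pos (by omega)
    have hrle : r ≤ 2 ^ j := P_le
    have hdiv : (P n - 1) / 2 ^ j = (r - 1) / 2 ^ j + 2 * q := by
      rw [show P n - 1 = (r - 1) + 2 ^ j * (2 * q) by rw [hsplit, pow_succ]; ring]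
      exact Int.add_mul_ediv_left _ _ (by positivity)
    have hzero : (r - 1) / 2 ^ j = 0 :=
      Int.ediv_eq_zero_of_lt (by omega) (by omega)
    unfold f
    simp only [Nat.add_sub_cancel, hdiv, hzero, zero_add]
    rw [show (2 * q) % 2 = 0 by omega]
    rw [mul_zero, sub_zero, mul_one, hsplit, Int.add_mul_emod_self_left]
    exact Int.emod_eq_of_lt (by omega) (by rw [pow_succ]; have := two_pow_pos j; omega)
  · -- odd case
    cases j with
    | zero => rw [f_one (by omega)]; simp [P]
    | succ i =>
      have hsplit : P n = -P (i+2) + 2 ^ (i+2) * P (n - (i+2)) := by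
        have := P_split hkn
        rwa [hodd.neg_one_pow, neg_one_mul] at this
      set r := P (i+2) with hr
      set q := P (n - (i+2)) with hq
      have hr1 : 1 ≤ r := P_pos (by omega)
      have hrlt : r < 2 ^ (i+1) := P_lt
      have hnk : 1 ≤ n - (i+2) := Nat.one_le_iff_ne_zero.mpr (by
        rintro h; rw [h] at hodd; simp at hodd)
      have hq1 : 1 ≤ q := P_pos hnk
      have hdiv : (P n - 1) / 2 ^ (i+1) = (2 ^ (i+1) - r - 1) / 2 ^ (i+1) + (1 + 2 * (q - 1)) := by
        rw [show P n - 1 = (2 ^ (i+1) - r - 1) + 2 ^ (i+1) * (1 + 2 * (q - 1)) by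
          rw [hsplit, pow_succ _ (i+1)]; ring]
        exact Int.add_mul_ediv_left _ _ (by positivity)
      have hb1 : (0:ℤ) ≤ 2 ^ (i+1) - r - 1 := by omega
      have hb2 : (2:ℤ) ^ (i+1) - r - 1 < 2 ^ (i+1) := by linarith
      have hzero : (2 ^ (i+1) - r - 1) / 2 ^ (i+1) = 0 :=
        Int.ediv_eq_zero_of_lt hb1 hb2
      unfold f
      simp only [Nat.add_sub_cancel, hdiv, hzero, zero_add]
      rw [show (1 + 2 * (q - 1)) % 2 = 1 by omega]
      rw [show P n * (1 - 2 * 1) = r + 2 ^ (i+2) * (-q) by rw [hsplit]; ring,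
        Int.add_mul_emod_self_left]
      exact Int.emod_eq_of_lt (by omega) (by have := @P_lt_pow (i+2); omega)

def M : ℕ → ℤ
  | 0 => 0
  | n + 1 => M n + P (n + 1)

lemma hM : ∀ n, 6 * M n = 4 * 2 ^ n - (-1) ^ n - 3 := by
  intro n
  induction n with
  | zero => simp [M]
  | succ k ih =>
    show 6 * (M k + P (k + 1)) = 4 * 2 ^ (k+1) - (-1) ^ (k+1) - 3
    have := hP (k+1)
    rw [pow_succ, pow_succ] at *
    linarith

lemma m_eq (n : ℕ) : m n = M n := by
  unfold m; rw [← hM n, Int.mul_ediv_cancel_left _ (by norm_num)]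

lemma sum_P (n : ℕ) : ∑ k ∈ Finset.Icc 1 n, P k = M n := by
  induction n with
  | zero => simp [M]
  | succ k ih =>
    rw [Finset.sum_Icc_succ_top (by omega), ih]; rfl

theorem S_at_p_eq_m (n : ℕ) (hn : 1 ≤ n) : S (p n) n = m n := by
  unfold S
  rw [p_eq, m_eq, ← sum_P]
  refine Finset.sum_congr rfl fun k hk => ?_
  rw [Finset.mem_Icc] at hk
  exact f_P hk.1 hk.2
end

section
/- For N = 2^n with n ≥ 1 and all integers i with 0 < i < N, S(i,N) ≤ m(N) - (p(N) - i), where m(N) = (4N - (-1)^n - 3)/6 and p(N) = (N - (-1)^n)/3. -/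
/-- `f i k` is the distance from `i` to the nearest multiple of `2^k`. -/
lemma f_eq (i : ℤ) (k : ℕ) (hk : 1 ≤ k) :
    f i k = min (i % 2 ^ k) (2 ^ k - i % 2 ^ k) := by
  obtain ⟨j, rfl⟩ : ∃ j, k = j + 1 := ⟨k - 1, by omega⟩
  set K : ℤ := 2 ^ j with hKdef
  have hK : 0 < K := pow_pos (by norm_num) j
  have h2 : (2:ℤ) ^ (j + 1) = 2 * K := by rw [pow_succ]; ring
  set s := (i - 1) % (2 * K) with hsdef
  set q := (i - 1) / (2 * K) with hqdef
  have hde := Int.mul_ediv_add_emod (i - 1) (2 * K)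
  have hiq : i = s + 1 + 2 * K * q := by linarith
  have hs0 : 0 ≤ s := Int.emod_nonneg _ (by positivity)
  have hs2 : s < 2 * K := Int.emod_lt_of_pos _ (by positivity)
  have hb : (i - 1) / 2 ^ (j + 1 - 1) % 2 = s / K := by
    have h1 : i - 1 = s + K * (2 * q) := by linarith
    have hsub : j + 1 - 1 = j := rfl
    rw [hsub, ← hKdef, h1, Int.add_mul_ediv_left _ _ hK.ne']
    have hd0 : 0 ≤ s / K := Int.ediv_nonneg hs0 hK.le
    have hd2 : s / K < 2 := by
      rw [Int.ediv_lt_iff_lt_mul hK]; omega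
    omega
  show (i * (1 - 2 * ((i - 1) / 2 ^ (j + 1 - 1) % 2))) % 2 ^ (j + 1) = _
  rw [hb, h2]
  rcases lt_or_ge s K with hsK | hKs
  · have hd : s / K = 0 := Int.ediv_eq_zero_of_lt hs0 hsK
    rw [hd]
    have hmul : i * (1 - 2 * 0) = i := by ring
    rw [hmul]
    have hr : i % (2 * K) = s + 1 := by
      rw [show i = (s + 1) + (2 * K) * q from by linarith, Int.add_mul_emod_self_left]
      exact Int.emod_eq_of_lt (by omega) (by omega)
    rw [hr]
    symm; apply min_eq_left; omega
  · have hd : s / K = 1 := by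
      have h1 : 1 ≤ s / K := by rw [Int.le_ediv_iff_mul_le hK]; omega
      have h2' : s / K < 2 := by rw [Int.ediv_lt_iff_lt_mul hK]; omega
      omega
    rw [hd]
    have hmul : i * (1 - 2 * 1) = -i := by ring
    rw [hmul]
    rcases eq_or_lt_of_le (by omega : s ≤ 2 * K - 1) with heq | hlt
    · have hi2 : i = 2 * K * (q + 1) := by rw [hiq, heq]; ring
      rw [hi2, show -(2 * K * (q + 1)) = 2 * K * (-(q + 1)) from by ring,
        Int.mul_emod_right, Int.mul_emod_right, sub_zero]
      symm; apply min_eq_left; omega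
    · have hr : i % (2 * K) = s + 1 := by
        rw [show i = (s + 1) + (2 * K) * q from by linarith, Int.add_mul_emod_self_left]
        exact Int.emod_eq_of_lt (by omega) (by omega)
      have hrn : (-i) % (2 * K) = 2 * K - (s + 1) := by
        rw [show -i = (2 * K - (s + 1)) + (2 * K) * (-q - 1) from by rw [hiq]; ring,
          Int.add_mul_emod_self_left]
        exact Int.emod_eq_of_lt (by omega) (by omega)
      rw [hrn, hr]
      symm; apply min_eq_right; omega

/-- Distance-to-multiple version of the density sum. -/
def T (i : ℤ) (n : ℕ) : ℤ := ∑ k ∈ Finset.Icc 1 n, min (i % 2 ^ k) (2 ^ k - i % 2 ^ k)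

lemma S_eq_T (i : ℤ) (n : ℕ) : S i n = T i n :=
  Finset.sum_congr rfl fun k hk => f_eq i k (Finset.mem_Icc.mp hk).1

lemma T_zero (i : ℤ) : T i 0 = 0 := by
  simp only [T]
  rw [show Finset.Icc 1 0 = ∅ from Finset.Icc_eq_empty (by omega), Finset.sum_empty]

lemma T_succ (i : ℤ) (n : ℕ) :
    T i (n + 1) = T i n + min (i % 2 ^ (n + 1)) (2 ^ (n + 1) - i % 2 ^ (n + 1)) := by
  simp only [T]
  exact Finset.sum_Icc_succ_top (by omega) _

lemma min_emod_neg (i M : ℤ) (hM : 0 < M) :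
    min ((-i) % M) (M - (-i) % M) = min (i % M) (M - i % M) := by
  have h0 : 0 ≤ i % M := Int.emod_nonneg _ hM.ne'
  have hlt : i % M < M := Int.emod_lt_of_pos _ hM
  have hde := Int.mul_ediv_add_emod i M
  rcases eq_or_lt_of_le h0 with h | h
  · have hd : M ∣ i := Int.dvd_of_emod_eq_zero h.symm
    have hd2 : (-i) % M = 0 := Int.emod_eq_zero_of_dvd (Int.dvd_neg.mpr hd)
    rw [hd2, ← h]
  · have hn : (-i) % M = M - i % M := by
      have key : (M - i % M) + M * (-(i / M) - 1) = -i := by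
        have : M * (-(i / M) - 1) = -(M * (i / M)) - M := by ring
        linarith
      rw [← key, Int.add_mul_emod_self_left]
      exact Int.emod_eq_of_lt (by omega) (by omega)
    rw [hn, show M - (M - i % M) = i % M from by ring]
    exact min_comm _ _

lemma T_symm (n : ℕ) (i : ℤ) : T (2 ^ n - i) n = T i n := by
  apply Finset.sum_congr rfl
  intro k hk
  obtain ⟨hk1, hk2⟩ := Finset.mem_Icc.mp hk
  have hpow : (2:ℤ) ^ n = 2 ^ k * 2 ^ (n - k) := by
    rw [← pow_add]; congr 1; omega
  have h1 : (2 ^ n - i) % 2 ^ k = (-i) % 2 ^ k := by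
    rw [show (2:ℤ) ^ n - i = -i + 2 ^ k * 2 ^ (n - k) from by rw [hpow]; ring,
      Int.add_mul_emod_self_left]
  rw [h1]
  exact min_emod_neg i (2 ^ k) (pow_pos (by norm_num) k)

lemma dvd3 (n : ℕ) : (3:ℤ) ∣ 2 ^ n - (-1) ^ n := by
  induction n with
  | zero => simp
  | succ n ih =>
    rw [show (2:ℤ) ^ (n + 1) - (-1) ^ (n + 1) = 2 * (2 ^ n - (-1) ^ n) + 3 * (-1) ^ n from by
      ring]
    exact dvd_add (ih.mul_left 2) ⟨(-1) ^ n, rfl⟩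

lemma dvd6 (n : ℕ) : (6:ℤ) ∣ 4 * 2 ^ n - (-1) ^ n - 3 := by
  induction n with
  | zero => norm_num
  | succ n ih =>
    rw [show (4:ℤ) * 2 ^ (n + 1) - (-1) ^ (n + 1) - 3 =
      2 * (4 * 2 ^ n - (-1) ^ n - 3) + 3 * ((-1) ^ n + 1) from by ring]
    apply dvd_add (ih.mul_left 2)
    rcases Nat.even_or_odd n with he | ho
    · rw [he.neg_one_pow]; norm_num
    · rw [ho.neg_one_pow]; norm_num

lemma hp3 (n : ℕ) : 3 * p n = 2 ^ n - (-1) ^ n := Int.mul_ediv_cancel' (dvd3 n)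

lemma hm6 (n : ℕ) : 6 * m n = 4 * 2 ^ n - (-1) ^ n - 3 := Int.mul_ediv_cancel' (dvd6 n)

lemma p_facts (n : ℕ) :
    0 ≤ p n ∧ 2 * p n ≤ 2 ^ n ∧ p (n + 1) = 2 ^ n - p n ∧ m (n + 1) = m n + p (n + 1) := by
  have h3 := hp3 n
  have h3' := hp3 (n + 1)
  have h6 := hm6 n
  have h6' := hm6 (n + 1)
  have hpow : (2:ℤ) ^ (n + 1) = 2 * 2 ^ n := by rw [pow_succ]; ring
  have hpow' : ((-1:ℤ)) ^ (n + 1) = -(-1) ^ n := by rw [pow_succ]; ring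
  rw [hpow, hpow'] at h3' h6'
  have ht : (1:ℤ) ≤ 2 ^ n := one_le_pow₀ (by norm_num)
  rcases Nat.even_or_odd n with he | ho
  · rw [he.neg_one_pow] at h3 h3' h6 h6'
    refine ⟨by linarith, by linarith, by linarith, by linarith⟩
  · rw [ho.neg_one_pow] at h3 h3' h6 h6'
    refine ⟨by linarith, by linarith, by linarith, by linarith⟩

lemma main (n : ℕ) : ∀ i : ℤ, 0 ≤ i → i ≤ 2 ^ n →
    T i n ≤ m n - max 0 (max (p n - i) (i - (2 ^ n - p n))) := by
  induction n with
  | zero =>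
    intro i h0 h1
    norm_num at h1
    have hm0 : m 0 = 0 := by norm_num [m]
    have hp0 : p 0 = 0 := by norm_num [p]
    rw [T_zero, hm0, hp0]
    have h2 : max (0 - i) (i - ((2:ℤ) ^ 0 - 0)) ≤ 0 := max_le (by omega) (by norm_num; omega)
    rw [max_eq_left h2]
    norm_num
  | succ n ih =>
    obtain ⟨hp0, hple, hpsucc, hmsucc⟩ := p_facts n
    have hpow : (2:ℤ) ^ (n + 1) = 2 * 2 ^ n := by rw [pow_succ]; ring
    have half : ∀ j : ℤ, 0 ≤ j → j ≤ 2 ^ n →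
        T j (n + 1) ≤ m (n + 1) - max 0 (max (p (n + 1) - j) (j - (2 ^ (n + 1) - p (n + 1)))) := by
      intro j h0 h1
      have ht : (1:ℤ) ≤ 2 ^ n := one_le_pow₀ (by norm_num)
      have hstep : T j (n + 1) = T j n + j := by
        rw [T_succ]
        have hmod : j % 2 ^ (n + 1) = j :=
          Int.emod_eq_of_lt h0 (by rw [hpow]; linarith)
        rw [hmod, min_eq_left (by rw [hpow]; linarith)]
      have hI := ih j h0 h1
      have e1 : (0:ℤ) ≤ max 0 (max (p n - j) (j - (2 ^ n - p n))) := le_max_left _ _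
      have e3 : j - (2 ^ n - p n) ≤ max 0 (max (p n - j) (j - (2 ^ n - p n))) :=
        le_trans (le_max_right _ _) (le_max_right _ _)
      rw [hstep]
      have hgoal : max 0 (max (p (n + 1) - j) (j - (2 ^ (n + 1) - p (n + 1)))) ≤
          m (n + 1) - (T j n + j) := by
        apply max_le
        · linarith
        · apply max_le
          · linarith
          · rw [hpow]; linarith
      linarith
    intro i h0 h1
    rcases le_or_gt i (2 ^ n) with hle | hgt
    · exact half i h0 hle
    · have hj0 : 0 ≤ 2 ^ (n + 1) - i := by linarith
      have hj1 : 2 ^ (n + 1) - i ≤ 2 ^ n := by rw [hpow]; linarith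
      have hh := half (2 ^ (n + 1) - i) hj0 hj1
      rw [T_symm] at hh
      rw [show p (n + 1) - (2 ^ (n + 1) - i) = i - (2 ^ (n + 1) - p (n + 1)) from by ring,
        show (2 ^ (n + 1) - i) - (2 ^ (n + 1) - p (n + 1)) = p (n + 1) - i from by ring,
        max_comm (i - (2 ^ (n + 1) - p (n + 1))) (p (n + 1) - i)] at hh
      exact hh

theorem S_le_m_sub (n : ℕ) (hn : 1 ≤ n) (i : ℤ) (hi0 : 0 < i) (hiN : i < 2 ^ n) :
    S i n ≤ m n - (p n - i) := by
  have hmain := main n i hi0.le hiN.le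
  have hle : p n - i ≤ max 0 (max (p n - i) (i - (2 ^ n - p n))) :=
    le_trans (le_max_left _ _) (le_max_right _ _)
  rw [S_eq_T]
  linarith
end

section
/- For N = 2^n and 0 < i < N, writing i in binary with n bits, with b(i,j) the j-th bit from the right and e(i,j) the number of 1's minus the number of 0's among bit positions j+1, ..., n of i, we have S(i,N) = (e(i,0) + N - 1)/2 + Σ_{j=1}^{n-1} 2^{j-2} · ε_j, where ε_j = e(i,j) if b(i,j) = 0 and ε_j = -e(i,j) if b(i,j) = 1. -/
lemma bit_decomp (x K : ℤ) (hK : 0 < K) :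
    x % (2 * K) = x % K + K * ((x / K) % 2) := by
  have h1 := Int.emod_add_mul_ediv x K
  have h2 := Int.emod_add_mul_ediv (x / K) 2
  have hm1 := Int.emod_nonneg x (ne_of_gt hK)
  have hm2 := Int.emod_lt_of_pos x hK
  have hq : (x / K) % 2 = 0 ∨ (x / K) % 2 = 1 := Int.emod_two_eq _
  have key : x = (x % K + K * ((x / K) % 2)) + (2 * K) * ((x / K) / 2) := by
    linear_combination -h1 - K * h2
  conv_lhs => rw [key]
  rw [Int.add_mul_emod_self_left]
  apply Int.emod_eq_of_lt
  · rcases hq with h | h <;> rw [h] <;> nlinarith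
  · rcases hq with h | h <;> rw [h] <;> nlinarith

lemma div_bit (x K : ℤ) (hK : 0 < K) : (x / K) % 2 = (x % (2 * K)) / K := by
  rw [bit_decomp x K hK, Int.add_mul_ediv_left _ _ (ne_of_gt hK),
    Int.ediv_eq_zero_of_lt (Int.emod_nonneg x (ne_of_gt hK)) (Int.emod_lt_of_pos x hK), zero_add]

lemma lemB (i : ℤ) (k : ℕ) :
    i % 2 ^ k = ∑ j ∈ Finset.Icc 1 k, b i j * 2 ^ (j - 1) := by
  induction k with
  | zero => simp
  | succ k ih =>
    have hK : (0:ℤ) < 2 ^ k := by positivity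
    have h2 : (2:ℤ) ^ (k + 1) = 2 * 2 ^ k := by ring
    rw [Finset.sum_Icc_succ_top (by omega : 1 ≤ k + 1), ← ih, h2, bit_decomp i _ hK]
    simp only [b, Nat.add_sub_cancel]
    ring

lemma lemA (i : ℤ) (hi : 0 < i) (k : ℕ) (hk : 1 ≤ k) :
    f i k = i % 2 ^ k + b i k * (2 ^ k - 2 * (i % 2 ^ k)) := by
  obtain ⟨t, rfl⟩ : ∃ t, k = t + 1 := ⟨k - 1, by omega⟩
  set K : ℤ := 2 ^ t with hKdef
  have hK : (0:ℤ) < K := by positivity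
  have h2 : (2:ℤ) ^ (t + 1) = 2 * K := by rw [hKdef]; ring
  have hbk : b i (t + 1) = (i % (2 * K)) / K := by
    simp only [b, Nat.add_sub_cancel, ← hKdef]
    exact div_bit i K hK
  have hbeta : ((i - 1) / 2 ^ (t + 1 - 1)) % 2 = ((i - 1) % (2 * K)) / K := by
    simp only [Nat.add_sub_cancel, ← hKdef]
    exact div_bit (i - 1) K hK
  set a := i % (2 * K) with ha
  have ha0 : 0 ≤ a := Int.emod_nonneg i (by positivity)
  have ha2 : a < 2 * K := Int.emod_lt_of_pos i (by positivity)
  have hia : i = (2 * K) * (i / (2 * K)) + a := (Int.mul_ediv_add_emod i (2 * K)).symm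
  rw [f, h2, hbeta]
  rcases eq_or_lt_of_le ha0 with hz | hpos
  · -- a = 0
    have him1 : (i - 1) % (2 * K) = 2 * K - 1 := by
      have : i - 1 = (2 * K - 1) + (2 * K) * (i / (2 * K) - 1) := by linear_combination hia - hz
      rw [this, Int.add_mul_emod_self_left, Int.emod_eq_of_lt (by linarith) (by linarith)]
    have hd : (2 * K - 1) / K = 1 := by
      have : 2 * K - 1 = (K - 1) + K * 1 := by ring
      rw [this, Int.add_mul_ediv_left _ _ (ne_of_gt hK),
        Int.ediv_eq_zero_of_lt (by linarith) (by linarith)]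
      norm_num
    rw [him1, hd, hbk, ← ha, ← hz]
    have hdvd : (2 * K) ∣ i := Int.dvd_of_emod_eq_zero (by omega)
    have : i * (1 - 2 * 1) % (2 * K) = 0 := by
      apply Int.emod_eq_zero_of_dvd
      exact Dvd.dvd.mul_right hdvd _
    rw [this]
    simp
  · -- 0 < a
    have him1 : (i - 1) % (2 * K) = a - 1 := by
      have : i - 1 = (a - 1) + (2 * K) * (i / (2 * K)) := by linear_combination hia
      rw [this, Int.add_mul_emod_self_left, Int.emod_eq_of_lt (by linarith) (by linarith)]
    rw [him1, hbk, ← ha]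
    rcases le_or_gt a K with hle | hgt
    · -- 1 ≤ a ≤ K
      have hd : (a - 1) / K = 0 := Int.ediv_eq_zero_of_lt (by linarith) (by linarith)
      rw [hd]
      have : i * (1 - 2 * 0) % (2 * K) = a := by rw [mul_zero, sub_zero, mul_one, ← ha]
      rw [this]
      rcases eq_or_lt_of_le hle with heq | hlt
      · rw [heq, Int.ediv_self (ne_of_gt hK)]; ring
      · have : a / K = 0 := Int.ediv_eq_zero_of_lt (by linarith) hlt
        rw [this]; ring
    · -- K < a < 2K
      have hd : (a - 1) / K = 1 := by
        have : a - 1 = (a - 1 - K) + K * 1 := by ring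
        rw [this, Int.add_mul_ediv_left _ _ (ne_of_gt hK),
          Int.ediv_eq_zero_of_lt (by linarith) (by linarith)]
        norm_num
      have hda : a / K = 1 := by
        have : a = (a - K) + K * 1 := by ring
        rw [this, Int.add_mul_ediv_left _ _ (ne_of_gt hK),
          Int.ediv_eq_zero_of_lt (by linarith) (by linarith)]
        norm_num
      rw [hd, hda]
      have hneg : i * (1 - 2 * 1) % (2 * K) = 2 * K - a := by
        have h3 : i * (1 - 2 * 1) = (2 * K - a) + (2 * K) * (-(i / (2 * K)) - 1) := by
          linear_combination -hia
        rw [h3, Int.add_mul_emod_self_left,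
          Int.emod_eq_of_lt (by linarith) (by linarith)]
      rw [hneg]; ring

lemma aux_sum (β : ℕ → ℚ) (n : ℕ) :
    ∑ j ∈ Finset.Icc 1 n, (2:ℚ) ^ j / 4 * (1 - 2 * β j)
      = (2 ^ n - 1) / 2 - ∑ j ∈ Finset.Icc 1 n, β j * 2 ^ (j - 1) := by
  induction n with
  | zero => simp
  | succ n ih =>
    rw [Finset.sum_Icc_succ_top (by omega : 1 ≤ n + 1),
      Finset.sum_Icc_succ_top (by omega : 1 ≤ n + 1), ih]
    simp only [Nat.add_sub_cancel]
    ring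

lemma key (β : ℕ → ℚ) (hβ : ∀ j, β j * β j = β j) (n : ℕ) :
    ∑ k ∈ Finset.Icc 1 n, ((∑ j ∈ Finset.Icc 1 k, β j * 2 ^ (j - 1))
        + β k * (2 ^ k - 2 * ∑ j ∈ Finset.Icc 1 k, β j * 2 ^ (j - 1)))
      = ((∑ l ∈ Finset.Icc 1 n, (2 * β l - 1)) + 2 ^ n - 1) / 2
        + ∑ j ∈ Finset.Icc 1 n, (2:ℚ) ^ j / 4 *
            ((1 - 2 * β j) * ∑ l ∈ Finset.Icc (j + 1) n, (2 * β l - 1)) := by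
  induction n with
  | zero => simp
  | succ n ih =>
    have h1 : 1 ≤ n + 1 := by omega
    simp only [Finset.sum_Icc_succ_top h1]
    have hinner : ∀ j ∈ Finset.Icc 1 n, (2:ℚ) ^ j / 4 *
        ((1 - 2 * β j) * ∑ l ∈ Finset.Icc (j + 1) (n + 1), (2 * β l - 1))
        = (2:ℚ) ^ j / 4 * ((1 - 2 * β j) * ∑ l ∈ Finset.Icc (j + 1) n, (2 * β l - 1))
          + (2 * β (n + 1) - 1) * ((2:ℚ) ^ j / 4 * (1 - 2 * β j)) := by
      intro j hj
      simp only [Finset.mem_Icc] at hj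
      rw [Finset.sum_Icc_succ_top (by omega : j + 1 ≤ n + 1)]
      ring
    have hsplit : ∑ j ∈ Finset.Icc 1 n, ((2:ℚ) ^ j / 4 *
          ((1 - 2 * β j) * ∑ l ∈ Finset.Icc (j + 1) n, (2 * β l - 1))
          + (2 * β (n + 1) - 1) * ((2:ℚ) ^ j / 4 * (1 - 2 * β j)))
        = (∑ j ∈ Finset.Icc 1 n, (2:ℚ) ^ j / 4 *
            ((1 - 2 * β j) * ∑ l ∈ Finset.Icc (j + 1) n, (2 * β l - 1)))
          + (2 * β (n + 1) - 1) *
            ((2 ^ n - 1) / 2 - ∑ j ∈ Finset.Icc 1 n, β j * 2 ^ (j - 1)) := by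
      rw [Finset.sum_add_distrib, ← Finset.mul_sum, aux_sum]
    rw [Finset.sum_congr rfl hinner, hsplit,
      show Finset.Icc (n + 1 + 1) (n + 1) = ∅ from Finset.Icc_eq_empty (by omega)]
    simp only [Finset.sum_empty, Nat.add_sub_cancel, mul_zero, add_zero]
    linear_combination ih - 2 * 2 ^ n * hβ (n + 1)

theorem S_bit_formula (n : ℕ) (hn : 1 ≤ n) (i : ℤ) (hi0 : 0 < i) (hiN : i < 2 ^ n) :
    (S i n : ℚ) = ((e i 0 n : ℚ) + 2 ^ n - 1) / 2 +
      ∑ j ∈ Finset.Icc 1 (n - 1),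
        (2 : ℚ) ^ ((j : ℤ) - 2) *
          (if b i j = 0 then (e i j n : ℚ) else -(e i j n : ℚ)) := by
  obtain ⟨m, rfl⟩ : ∃ m, n = m + 1 := ⟨n - 1, by omega⟩
  set β : ℕ → ℚ := fun j => ((b i j : ℤ) : ℚ) with hβdef
  have hb01 : ∀ j, b i j = 0 ∨ b i j = 1 := fun j => Int.emod_two_eq _
  have hβ : ∀ j, β j * β j = β j := by
    intro j; rcases hb01 j with h | h <;> simp [hβdef, h]
  have hE : ∀ j, (e i j (m + 1) : ℚ) = ∑ l ∈ Finset.Icc (j + 1) (m + 1), (2 * β l - 1) := by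
    intro j; rw [e]; push_cast; simp [hβdef]
  have hfq : ∀ k ∈ Finset.Icc 1 (m + 1), (f i k : ℚ)
      = (∑ j ∈ Finset.Icc 1 k, β j * 2 ^ (j - 1))
        + β k * (2 ^ k - 2 * ∑ j ∈ Finset.Icc 1 k, β j * 2 ^ (j - 1)) := by
    intro k hk
    simp only [Finset.mem_Icc] at hk
    rw [lemA i hi0 k hk.1, lemB i k]
    push_cast
    simp [hβdef]
  have heq : (S i (m + 1) : ℚ) = ∑ k ∈ Finset.Icc 1 (m + 1),
      ((∑ j ∈ Finset.Icc 1 k, β j * 2 ^ (j - 1))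
        + β k * (2 ^ k - 2 * ∑ j ∈ Finset.Icc 1 k, β j * 2 ^ (j - 1))) := by
    rw [S]; push_cast; exact Finset.sum_congr rfl hfq
  rw [heq, key β hβ (m + 1)]
  have hsum : ∑ j ∈ Finset.Icc 1 (m + 1), (2:ℚ) ^ j / 4 *
      ((1 - 2 * β j) * ∑ l ∈ Finset.Icc (j + 1) (m + 1), (2 * β l - 1))
      = ∑ j ∈ Finset.Icc 1 m, (2 : ℚ) ^ ((j : ℤ) - 2) *
          (if b i j = 0 then (e i j (m + 1) : ℚ) else -(e i j (m + 1) : ℚ)) := by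
    rw [Finset.sum_Icc_succ_top (by omega : 1 ≤ m + 1),
      show Finset.Icc (m + 1 + 1) (m + 1) = ∅ from Finset.Icc_eq_empty (by omega)]
    simp only [Finset.sum_empty, mul_zero, add_zero]
    refine Finset.sum_congr rfl ?_
    intro j hj
    have hz : (2:ℚ) ^ ((j : ℤ) - 2) = 2 ^ j / 4 := by
      rw [zpow_sub₀ (two_ne_zero), zpow_natCast]; norm_num
    have hβj : β j = ((b i j : ℤ) : ℚ) := by simp [hβdef]
    rcases hb01 j with h | h
    · rw [hz, if_pos h, hE j, hβj, h]
      push_cast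
      ring
    · rw [hz, if_neg (by rw [h]; norm_num), hE j, hβj, h]
      push_cast
      ring
  rw [hsum, ← hE 0]
  simp only [Nat.add_sub_cancel]
end

section
/- For N = 2^n with n even, n ≥ 2, an integer i with 0 < i < N satisfies S(i,N) = m(N) if and only if the n-bit binary representation of i, read in consecutive pairs from the left, consists of pairs each equal to 01 or 10, except that the rightmost pair may also be 11. -/
/-- The target condition on the binary digits of `i`. -/
def Cond (i : ℤ) (t : ℕ) : Prop :=
  (∀ j : ℕ, 2 ≤ j → j ≤ t → b i (2 * j) + b i (2 * j - 1) = 1) ∧ 1 ≤ b i 2 + b i 1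

lemma f_zero (k : ℕ) : f 0 k = 0 := by simp [f]

lemma S_zero (n : ℕ) : S 0 n = 0 := by simp [S, f_zero]

lemma f_eval {k : ℕ} (hk : 1 ≤ k) {i : ℤ} (h0 : 0 ≤ i) (h1 : i < 2 ^ k) :
    f i k = min i (2 ^ k - i) := by
  obtain ⟨k, rfl⟩ : ∃ k', k = k' + 1 := ⟨k - 1, by omega⟩
  have hp : (0:ℤ) < 2 ^ k := by positivity
  have hpow : (2:ℤ) ^ (k + 1) = 2 ^ k * 2 := pow_succ 2 k
  rcases h0.lt_or_eq with h0' | h0'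
  · by_cases hle : i ≤ 2 ^ k
    · have hdiv : (i - 1) / 2 ^ (k + 1 - 1) = 0 := by
        simpa using Int.ediv_eq_zero_of_lt (by omega) (by linarith)
      have : f i (k + 1) = i % 2 ^ (k + 1) := by
        rw [f, hdiv]; norm_num
      rw [this, Int.emod_eq_of_lt h0 h1, min_eq_left (by linarith)]
    · push_neg at hle
      have hdiv : (i - 1) / 2 ^ (k + 1 - 1) = 1 := by
        have h3 : i - 1 = (i - 1 - 2 ^ k) + 1 * 2 ^ k := by ring
        simp only [Nat.add_sub_cancel]
        rw [h3, Int.add_mul_ediv_right _ _ hp.ne',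
          Int.ediv_eq_zero_of_lt (by linarith) (by linarith)]
        norm_num
      have h2 : f i (k + 1) = (-i) % 2 ^ (k + 1) := by
        rw [f, hdiv]; norm_num
      have h4 : (-i) = (2 ^ (k + 1) - i) + (-1) * 2 ^ (k + 1) := by ring
      rw [h2, h4, Int.add_mul_emod_self_right,
        Int.emod_eq_of_lt (by linarith) (by linarith),
        min_eq_right (by linarith)]
  · rw [← h0', f_zero, sub_zero, min_eq_left (by positivity)]

lemma f_mod (i : ℤ) {k : ℕ} (hk : 1 ≤ k) : f i k = f (i % 2 ^ k) k := by
  obtain ⟨k, rfl⟩ : ∃ k', k = k' + 1 := ⟨k - 1, by omega⟩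
  have hp : (0:ℤ) < 2 ^ k := by positivity
  have hi : i = 2 ^ (k + 1) * (i / 2 ^ (k + 1)) + i % 2 ^ (k + 1) :=
    (Int.mul_ediv_add_emod i _).symm
  set q := i / 2 ^ (k + 1) with hq
  set r := i % 2 ^ (k + 1) with hr
  have hb : ((i - 1) / 2 ^ k) % 2 = ((r - 1) / 2 ^ k) % 2 := by
    have h1 : i - 1 = (r - 1) + (2 * q) * 2 ^ k := by
      calc i - 1 = (2 ^ (k + 1) * q + r) - 1 := by rw [← hi]
        _ = (r - 1) + (2 * q) * 2 ^ k := by rw [pow_succ]; ring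
    rw [h1, Int.add_mul_ediv_right _ _ hp.ne', Int.add_mul_emod_self_left]
  simp only [f, Nat.add_sub_cancel]
  rw [hb]
  conv_lhs => rw [hi]
  rw [show (2 ^ (k + 1) * q + r) * (1 - 2 * ((r - 1) / 2 ^ k % 2)) =
      r * (1 - 2 * ((r - 1) / 2 ^ k % 2)) + (q * (1 - 2 * ((r - 1) / 2 ^ k % 2))) * 2 ^ (k + 1)
    from by ring, Int.add_mul_emod_self_right]

lemma f_le_half {k : ℕ} (hk : 1 ≤ k) {x : ℤ} (h0 : 0 ≤ x) (hx : 2 * x ≤ 2 ^ k) :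
    f x k = x := by
  have hp : (0:ℤ) < 2 ^ k := by positivity
  rw [f_eval hk h0 (by linarith), min_eq_left (by linarith)]

lemma f_ge_half {k : ℕ} (hk : 1 ≤ k) {x : ℤ} (hx : 2 ^ k ≤ 2 * x) (h1 : x < 2 ^ k) :
    f x k = 2 ^ k - x := by
  have hp : (0:ℤ) < 2 ^ k := by positivity
  rw [f_eval hk (by linarith) h1, min_eq_right (by linarith)]

lemma S_split (i : ℤ) (n : ℕ) (hn : 1 ≤ n) :
    S i (n + 2) = S (i % 2 ^ n) n + f i (n + 1) + f i (n + 2) := by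
  unfold S
  rw [show n + 2 = (n + 1) + 1 from rfl, Finset.sum_Icc_succ_top (by omega),
    Finset.sum_Icc_succ_top (by omega)]
  congr 2
  refine Finset.sum_congr rfl fun k hk => ?_
  simp only [Finset.mem_Icc] at hk
  rw [f_mod i hk.1, f_mod (i % 2 ^ n) hk.1,
    Int.emod_emod_of_dvd i (pow_dvd_pow 2 hk.2)]

lemma b_low (q r : ℤ) (n l : ℕ) (hl : 1 ≤ l) (hln : l ≤ n) :
    b (q * 2 ^ n + r) l = b r l := by
  have hp : (0:ℤ) < 2 ^ (l - 1) := by positivity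
  have e1 : (2:ℤ) ^ n = 2 ^ (l - 1) * (2 ^ (n - l) * 2) := by
    rw [← pow_succ, ← pow_add]
    congr 1
    omega
  unfold b
  rw [show q * 2 ^ n + r = r + (q * 2 ^ (n - l) * 2) * 2 ^ (l - 1) from by rw [e1]; ring,
    Int.add_mul_ediv_right _ _ hp.ne',
    show r / 2 ^ (l - 1) + q * 2 ^ (n - l) * 2 = r / 2 ^ (l - 1) + (q * 2 ^ (n - l)) * 2
      from by ring,
    Int.add_mul_emod_self_right]

lemma b_div (q r : ℤ) (k : ℕ) (h0 : 0 ≤ r) (hr : r < 2 ^ k) :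
    b (q * 2 ^ k + r) (k + 1) = q % 2 := by
  have hp : (0:ℤ) < 2 ^ k := by positivity
  unfold b
  rw [Nat.add_sub_cancel, show q * 2 ^ k + r = r + q * 2 ^ k from by ring,
    Int.add_mul_ediv_right _ _ hp.ne', Int.ediv_eq_zero_of_lt h0 hr, zero_add]

lemma m_step (t : ℕ) : m (2 * t + 2) = m (2 * t) + 2 ^ (2 * t + 1) := by
  unfold m
  have h1 : (-1:ℤ) ^ (2 * t) = 1 := by rw [pow_mul]; norm_num
  have h2 : (-1:ℤ) ^ (2 * t + 2) = 1 := by rw [pow_add, pow_mul]; norm_num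
  rw [h1, h2,
    show 4 * (2:ℤ) ^ (2 * t + 2) - 1 - 3 = (4 * 2 ^ (2 * t) - 1 - 3) + 2 ^ (2 * t + 1) * 6
      from by ring,
    Int.add_mul_ediv_right _ _ (by norm_num : (6:ℤ) ≠ 0)]

lemma m_ge (t : ℕ) (ht : 1 ≤ t) : 2 ≤ m (2 * t) := by
  induction t, ht using Nat.le_induction with
  | base => decide
  | succ t ht ih =>
    rw [show 2 * (t + 1) = 2 * t + 2 from by ring, m_step]
    have : (0:ℤ) ≤ 2 ^ (2 * t + 1) := by positivity
    linarith

lemma cond_step (q r : ℤ) (t : ℕ) (ht : 1 ≤ t) (h0 : 0 ≤ r) (hr : r < 2 ^ (2 * t))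
    (hq0 : 0 ≤ q) (hq4 : q < 4) :
    Cond (q * 2 ^ (2 * t) + r) (t + 1) ↔ ((q = 1 ∨ q = 2) ∧ Cond r t) := by
  have hx : (0:ℤ) < 2 ^ (2 * t) := by positivity
  have h1 : b (q * 2 ^ (2 * t) + r) (2 * t + 1) = q % 2 := b_div q r (2 * t) h0 hr
  have h2 : b (q * 2 ^ (2 * t) + r) (2 * t + 2) = (q / 2) % 2 := by
    have hq2 : 0 ≤ q % 2 ∧ q % 2 < 2 := ⟨Int.emod_nonneg q two_ne_zero, Int.emod_lt_of_pos q two_pos⟩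
    have hi : q * 2 ^ (2 * t) + r = (q / 2) * 2 ^ (2 * t + 1) + ((q % 2) * 2 ^ (2 * t) + r) := by
      rw [pow_succ]
      linear_combination (-(2:ℤ) ^ (2 * t)) * Int.mul_ediv_add_emod q 2
    have hb1 : (0:ℤ) ≤ (q % 2) * 2 ^ (2 * t) + r :=
      add_nonneg (mul_nonneg hq2.1 hx.le) h0
    have hb2 : (q % 2) * 2 ^ (2 * t) + r < 2 ^ (2 * t + 1) := by
      have : (q % 2) * 2 ^ (2 * t) ≤ 1 * 2 ^ (2 * t) :=
        mul_le_mul_of_nonneg_right (by omega) hx.le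
      rw [pow_succ]
      linarith
    calc b (q * 2 ^ (2 * t) + r) (2 * t + 2)
        = b ((q / 2) * 2 ^ (2 * t + 1) + ((q % 2) * 2 ^ (2 * t) + r)) ((2 * t + 1) + 1) := by
          rw [← hi]
      _ = (q / 2) % 2 := b_div _ _ _ hb1 hb2
  have htop : b (q * 2 ^ (2 * t) + r) (2 * (t + 1)) + b (q * 2 ^ (2 * t) + r) (2 * (t + 1) - 1)
      = (q / 2) % 2 + q % 2 := by
    rw [show 2 * (t + 1) - 1 = 2 * t + 1 from by omega,
      show 2 * (t + 1) = 2 * t + 2 from by ring, h1, h2]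
  have hlow : ∀ l : ℕ, 1 ≤ l → l ≤ 2 * t → b (q * 2 ^ (2 * t) + r) l = b r l :=
    fun l a c => b_low q r (2 * t) l a c
  unfold Cond
  constructor
  · rintro ⟨H, hbot⟩
    have hsum : (q / 2) % 2 + q % 2 = 1 := htop.symm.trans (H (t + 1) (by omega) le_rfl)
    have hq12 : q = 1 ∨ q = 2 := by omega
    refine ⟨hq12, fun j hj2 hjt => ?_, ?_⟩
    · rw [← hlow (2 * j) (by omega) (by omega), ← hlow (2 * j - 1) (by omega) (by omega)]
      exact H j hj2 (by omega)
    · rw [← hlow 2 (by omega) (by omega), ← hlow 1 (by omega) (by omega)]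
      exact hbot
  · rintro ⟨hq12, H, hbot⟩
    refine ⟨fun j hj2 hjt => ?_, ?_⟩
    · rcases eq_or_lt_of_le hjt with hj | hj
      · subst hj
        rw [htop]
        omega
      · rw [hlow (2 * j) (by omega) (by omega), hlow (2 * j - 1) (by omega) (by omega)]
        exact H j hj2 (by omega)
    · rw [hlow 2 (by omega) (by omega), hlow 1 (by omega) (by omega)]
      exact hbot

lemma key_s9 (t : ℕ) (ht : 1 ≤ t) : ∀ i : ℤ, 0 ≤ i → i < 2 ^ (2 * t) →
    S i (2 * t) ≤ m (2 * t) ∧ (S i (2 * t) = m (2 * t) ↔ Cond i t) := by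
  induction t, ht using Nat.le_induction with
  | base =>
    intro i h0 hlt
    have h4 : i < 4 := by norm_num at hlt; exact hlt
    unfold Cond
    interval_cases i
    · refine ⟨by decide, ?_⟩
      constructor
      · intro h; exact absurd h (by decide)
      · rintro ⟨-, hb⟩; exact absurd hb (by decide)
    · exact ⟨by decide, ⟨fun _ => ⟨fun j hj2 hj1 => by exfalso; omega, by decide⟩,
        fun _ => by decide⟩⟩
    · exact ⟨by decide, ⟨fun _ => ⟨fun j hj2 hj1 => by exfalso; omega, by decide⟩,
        fun _ => by decide⟩⟩
    · exact ⟨by decide, ⟨fun _ => ⟨fun j hj2 hj1 => by exfalso; omega, by decide⟩,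
        fun _ => by decide⟩⟩
  | succ t ht ih =>
    intro i h0 hN
    rw [show 2 * (t + 1) = 2 * t + 2 from by ring] at hN ⊢
    have hX : (0:ℤ) < 2 ^ (2 * t) := by positivity
    have hX1 : (2:ℤ) ^ (2 * t + 1) = 2 ^ (2 * t) * 2 := pow_succ 2 (2 * t)
    have hX2 : (2:ℤ) ^ (2 * t + 2) = 2 ^ (2 * t) * 2 * 2 := by rw [pow_succ, pow_succ]
    have hm2 : 2 ≤ m (2 * t) := m_ge t ht
    rw [m_step t]
    obtain ⟨q, r, hq0, hq4, hr0, hrX, rfl⟩ :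
        ∃ q r : ℤ, 0 ≤ q ∧ q < 4 ∧ 0 ≤ r ∧ r < 2 ^ (2 * t) ∧ i = q * 2 ^ (2 * t) + r := by
      refine ⟨i / 2 ^ (2 * t), i % 2 ^ (2 * t), Int.ediv_nonneg h0 hX.le, ?_,
        Int.emod_nonneg i hX.ne', Int.emod_lt_of_pos i hX, ?_⟩
      · rw [Int.ediv_lt_iff_lt_mul hX]
        rw [hX2] at hN
        linarith
      · linarith [Int.mul_ediv_add_emod i (2 ^ (2 * t))]
    have hmod : (q * 2 ^ (2 * t) + r) % 2 ^ (2 * t) = r := by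
      rw [show q * 2 ^ (2 * t) + r = r + q * 2 ^ (2 * t) from by ring, Int.add_mul_emod_self_right,
        Int.emod_eq_of_lt hr0 hrX]
    have hS := S_split (q * 2 ^ (2 * t) + r) (2 * t) (by omega)
    rw [hmod] at hS
    obtain ⟨ihle, ihiff⟩ := ih r hr0 hrX
    rw [cond_step q r t ht hr0 hrX hq0 hq4]
    interval_cases q
    · -- q = 0
      simp only [zero_mul, zero_add] at hS ⊢
      have hf1 : f r (2 * t + 1) = r := f_le_half (by omega) hr0 (by linarith)
      have hf2 : f r (2 * t + 2) = r := f_le_half (by omega) hr0 (by linarith)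
      rw [hS, hf1, hf2]
      refine ⟨by linarith, ?_, ?_⟩
      · intro h; exfalso; linarith
      · intro hc; exfalso; revert hc; norm_num
    · -- q = 1
      simp only [one_mul] at hS ⊢
      have hf1 : f (2 ^ (2 * t) + r) (2 * t + 1) = 2 ^ (2 * t + 1) - (2 ^ (2 * t) + r) :=
        f_ge_half (by omega) (by linarith) (by linarith)
      have hf2 : f (2 ^ (2 * t) + r) (2 * t + 2) = 2 ^ (2 * t) + r :=
        f_le_half (by omega) (by linarith) (by linarith)
      rw [hS, hf1, hf2]
      refine ⟨by linarith, ?_, ?_⟩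
      · intro h
        exact ⟨by norm_num, ihiff.mp (by linarith)⟩
      · rintro ⟨-, hc⟩
        have := ihiff.mpr hc
        linarith
    · -- q = 2
      have hm1 : (2 * 2 ^ (2 * t) + r) % 2 ^ (2 * t + 1) = r := by
        rw [hX1, show 2 * 2 ^ (2 * t) + r = r + 1 * (2 ^ (2 * t) * 2) from by ring,
          Int.add_mul_emod_self_right, Int.emod_eq_of_lt hr0 (by linarith)]
      have hf1 : f (2 * 2 ^ (2 * t) + r) (2 * t + 1) = r := by
        rw [f_mod _ (by omega : 1 ≤ 2 * t + 1), hm1]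
        exact f_le_half (by omega) hr0 (by linarith)
      have hf2 : f (2 * 2 ^ (2 * t) + r) (2 * t + 2) = 2 ^ (2 * t + 2) - (2 * 2 ^ (2 * t) + r) :=
        f_ge_half (by omega) (by linarith) (by linarith)
      rw [hS, hf1, hf2]
      refine ⟨by linarith, ?_, ?_⟩
      · intro h
        exact ⟨by norm_num, ihiff.mp (by linarith)⟩
      · rintro ⟨-, hc⟩
        have := ihiff.mpr hc
        linarith
    · -- q = 3
      have hm1 : (3 * 2 ^ (2 * t) + r) % 2 ^ (2 * t + 1) = 2 ^ (2 * t) + r := by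
        rw [hX1, show 3 * 2 ^ (2 * t) + r = (2 ^ (2 * t) + r) + 1 * (2 ^ (2 * t) * 2) from by ring,
          Int.add_mul_emod_self_right, Int.emod_eq_of_lt (by linarith) (by linarith)]
      have hf1 : f (3 * 2 ^ (2 * t) + r) (2 * t + 1) = 2 ^ (2 * t + 1) - (2 ^ (2 * t) + r) := by
        rw [f_mod _ (by omega : 1 ≤ 2 * t + 1), hm1]
        exact f_ge_half (by omega) (by linarith) (by linarith)
      have hf2 : f (3 * 2 ^ (2 * t) + r) (2 * t + 2) = 2 ^ (2 * t + 2) - (3 * 2 ^ (2 * t) + r) :=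
        f_ge_half (by omega) (by linarith) (by linarith)
      rw [hS, hf1, hf2]
      refine ⟨by linarith, ?_, ?_⟩
      · intro h
        exfalso
        have hr00 : r = 0 := by linarith
        rw [hr00, S_zero] at h
        rw [hr00] at hrX
        linarith
      · intro hc; exfalso; revert hc; norm_num

theorem maximizers_even (n : ℕ) (hn2 : 2 ≤ n) (hne : Even n)
    (i : ℤ) (hi0 : 0 < i) (hiN : i < 2 ^ n) :
    S i n = m n ↔
      ((∀ j : ℕ, 2 ≤ j → j ≤ n / 2 → b i (2 * j) + b i (2 * j - 1) = 1) ∧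
       1 ≤ b i 2 + b i 1) := by
  obtain ⟨t, rfl⟩ : ∃ t, n = 2 * t := by
    obtain ⟨s, hs⟩ := hne
    exact ⟨s, by omega⟩
  have h := (key_s9 t (by omega) i hi0.le hiN).2
  rw [show 2 * t / 2 = t from by omega]
  exact h
end

section
/- For N = 2^n, f(i,k) equals the number of pairs (a,b) with 0 ≤ a < i ≤ b < N, b - a = 2^(k-1), and a, b differing only in bit k of their binary representations (i.e., b = a + 2^(k-1) with bit k-1 of a equal to 0). In other words, f(i,k) counts the dimension-k hypercube edges crossing the cut between positions i-1 and i in the linear order 0, 1, ..., N-1. -/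
/-! A dimension-`k` edge crossing the cut at `i` is determined by its lower end `a`, which ranges
over the window `[i - w, i)`, `w = 2^(k-1)`, subject to `a / w` being even. Writing
`i = s * w + t` with `1 ≤ t ≤ w`, the window meets block `s - 1` in `w - t` points and block `s`
in `t` points, so exactly one of the two blocks contributes: `t` edges if `s` is even and `w - t`
if `s` is odd. The factor `1 - 2 * (s % 2) = ±1` in `f` selects the same value modulo `2 * w`.
The range constraints `0 ≤ a` and `a + w < 2^n` are then automatic: block `-1` is odd, and
`2^k` divides `2^n`. -/

open Finset

namespace Int

lemma nonneg_of_neg_le_of_ediv_emod_two_eq_zero {w a : ℤ} (hw : 0 < w) (ha : -w ≤ a)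
    (heven : a / w % 2 = 0) : 0 ≤ a := by
  by_contra! hneg
  have : a / w = -1 := (ediv_eq_iff_of_pos hw).2 ⟨by linarith, by linarith⟩
  simp [this] at heven

lemma add_lt_of_ediv_emod_two_eq_zero {w a N : ℤ} (hw : 0 < w) (hN : 2 * w ∣ N) (ha : a < N)
    (heven : a / w % 2 = 0) : a + w < N := by
  obtain ⟨M, rfl⟩ := hN
  obtain ⟨q, hq⟩ : ∃ q, a / w = 2 * q := ⟨a / w / 2, by omega⟩
  have hlo : 2 * q * w ≤ a := ((ediv_eq_iff_of_pos hw).1 hq).1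
  have hhi : a < 2 * q * w + w := ((ediv_eq_iff_of_pos hw).1 hq).2
  have hqM : q < M := by nlinarith
  nlinarith

end Int

lemma card_filter_ediv_even_Ico {w s t : ℤ} (hw : 0 < w) (ht0 : 0 ≤ t) (htw : t ≤ w) :
    (((Ico (s * w + t - w) (s * w + t)).filter (fun a => a / w % 2 = 0)).card : ℤ) =
      if s % 2 = 0 then t else w - t := by
  have hsplit : Ico (s * w + t - w) (s * w + t) =
      Ico (s * w + t - w) (s * w) ∪ Ico (s * w) (s * w + t) :=
    (Ico_union_Ico_eq_Ico (by linarith) (by linarith)).symm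
  have hprev : ∀ a ∈ Ico (s * w + t - w) (s * w), a / w = s - 1 := fun a ha => by
    rw [mem_Ico] at ha
    exact (Int.ediv_eq_iff_of_pos hw).2 ⟨by linarith, by linarith⟩
  have hcur : ∀ a ∈ Ico (s * w) (s * w + t), a / w = s := fun a ha => by
    rw [mem_Ico] at ha
    exact (Int.ediv_eq_iff_of_pos hw).2 ⟨ha.1, by linarith⟩
  rw [hsplit, filter_union, card_union_of_disjoint
    (disjoint_filter_filter (Ico_disjoint_Ico_consecutive _ _ _))]
  split_ifs with hs
  · rw [filter_false_of_mem fun a ha => by rw [hprev a ha]; omega,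
      filter_true_of_mem fun a ha => by rw [hcur a ha]; exact hs]
    simp only [card_empty, zero_add, Int.card_Ico]
    omega
  · rw [filter_true_of_mem fun a ha => by rw [hprev a ha]; omega,
      filter_false_of_mem fun a ha => by rw [hcur a ha]; exact hs]
    simp only [card_empty, add_zero, Int.card_Ico]
    omega

lemma signed_emod_two_mul_eq_ite {w s t : ℤ} (ht1 : 1 ≤ t) (htw : t ≤ w) :
    (s * w + t) * (1 - 2 * (s % 2)) % (2 * w) = if s % 2 = 0 then t else w - t := by
  obtain ⟨q, hq | hq⟩ : ∃ q, s = 2 * q ∨ s = 2 * q + 1 := ⟨s / 2, by omega⟩ <;> subst hq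
  · rw [if_pos (by omega), show (2 * q * w + t) * (1 - 2 * (2 * q % 2)) = t + 2 * w * q by
      rw [show 2 * q % 2 = 0 by omega]; ring]
    rw [Int.add_mul_emod_self_left, Int.emod_eq_of_lt (by linarith) (by linarith)]
  · rw [if_neg (by omega), show ((2 * q + 1) * w + t) * (1 - 2 * ((2 * q + 1) % 2))
      = (w - t) + 2 * w * (-q - 1) by rw [show (2 * q + 1) % 2 = 1 by omega]; ring]
    rw [Int.add_mul_emod_self_left, Int.emod_eq_of_lt (by linarith) (by linarith)]

lemma f_eq_ite {k : ℕ} (hk : 1 ≤ k) {s t : ℤ} (ht1 : 1 ≤ t) (htw : t ≤ 2 ^ (k - 1)) :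
    f (s * 2 ^ (k - 1) + t) k = if s % 2 = 0 then t else 2 ^ (k - 1) - t := by
  have hw : (0 : ℤ) < 2 ^ (k - 1) := by positivity
  have hdiv : (s * 2 ^ (k - 1) + t - 1) / 2 ^ (k - 1) = s :=
    (Int.ediv_eq_iff_of_pos hw).2 ⟨by linarith, by linarith⟩
  have hpow : (2 : ℤ) ^ k = 2 * 2 ^ (k - 1) := by rw [← pow_succ']; congr 1; omega
  rw [f, hdiv, hpow, signed_emod_two_mul_eq_ite ht1 htw]

lemma card_filter_crossing_eq_card_filter_Ico {N w i : ℤ} (hw : 0 < w) (hN : 2 * w ∣ N)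
    (hi0 : 0 ≤ i) (hiN : i ≤ N) :
    ((Ico 0 N ×ˢ Ico 0 N).filter (fun ab => ab.1 < i ∧ i ≤ ab.2 ∧ ab.2 = ab.1 + w ∧
      ab.1 / w % 2 = 0)).card = ((Ico (i - w) i).filter (fun a => a / w % 2 = 0)).card := by
  refine card_nbij' Prod.fst (fun a => (a, a + w)) ?_ ?_ ?_ ?_
  · rintro ⟨a, b⟩ hab
    simp only [coe_filter, mem_product, mem_Ico, Set.mem_ofPred_eq] at hab ⊢
    omega
  · intro a ha
    simp only [coe_filter, mem_Ico, Set.mem_ofPred_eq, mem_product] at ha ⊢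
    have ha0 := Int.nonneg_of_neg_le_of_ediv_emod_two_eq_zero hw (by linarith) ha.2
    have haN := Int.add_lt_of_ediv_emod_two_eq_zero hw hN (by linarith) ha.2
    refine ⟨⟨⟨ha0, by linarith⟩, by linarith, haN⟩, ha.1.2, by linarith, trivial, ha.2⟩
  · rintro ⟨a, b⟩ hab
    simp only [coe_filter, mem_product, mem_Ico, Set.mem_ofPred_eq] at hab
    simp [hab.2.2.2.1]
  · intro a _
    rfl

theorem f_counts_crossing_edges_general (n : ℕ) (k : ℕ) (hk1 : 1 ≤ k) (hkn : k ≤ n)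
    (i : ℤ) (hi0 : 0 ≤ i) (hiN : i ≤ 2 ^ n) :
    f i k = ((Finset.Ico (0 : ℤ) (2 ^ n) ×ˢ Finset.Ico (0 : ℤ) (2 ^ n)).filter
      (fun ab => ab.1 < i ∧ i ≤ ab.2 ∧ ab.2 = ab.1 + 2 ^ (k - 1) ∧
        (ab.1 / 2 ^ (k - 1)) % 2 = 0)).card := by
  have hw : (0 : ℤ) < 2 ^ (k - 1) := by positivity
  have hdvd : 2 * 2 ^ (k - 1) ∣ (2 : ℤ) ^ n := by
    rw [← pow_succ']
    exact pow_dvd_pow 2 (by omega)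
  rw [card_filter_crossing_eq_card_filter_Ico hw hdvd hi0 hiN]
  obtain ⟨s, t, rfl, ht1, htw⟩ :
      ∃ s t : ℤ, i = s * 2 ^ (k - 1) + t ∧ 1 ≤ t ∧ t ≤ 2 ^ (k - 1) :=
    ⟨(i - 1) / 2 ^ (k - 1), (i - 1) % 2 ^ (k - 1) + 1,
      by linarith [Int.ediv_mul_add_emod (i - 1) (2 ^ (k - 1))],
      by linarith [Int.emod_nonneg (i - 1) hw.ne'], by linarith [Int.emod_lt_of_pos (i - 1) hw]⟩
  rw [f_eq_ite hk1 ht1 htw, card_filter_ediv_even_Ico hw (by linarith) htw]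

theorem f_counts_crossing_edges (n : ℕ) (hn : 1 ≤ n) (k : ℕ) (hk1 : 1 ≤ k) (hkn : k ≤ n)
    (i : ℤ) (hi0 : 0 ≤ i) (hiN : i ≤ 2 ^ n) :
    f i k = ((Finset.Ico (0 : ℤ) (2 ^ n) ×ˢ Finset.Ico (0 : ℤ) (2 ^ n)).filter
      (fun ab => ab.1 < i ∧ i ≤ ab.2 ∧ ab.2 = ab.1 + 2 ^ (k - 1) ∧
        (ab.1 / 2 ^ (k - 1)) % 2 = 0)).card :=
  f_counts_crossing_edges_general n k hk1 hkn i hi0 hiN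
end

section
/- For N = 2^n with n ≥ 1, the total wire density S(i,N) at cut position i equals the number of hypercube edges {a,b} with a < i ≤ b, where edges join numbers in 0..N-1 differing in exactly one binary bit. -/
open Finset

theorem Int.emod_eq_of_eq_add_mul {a b q r : ℤ} (h : a = r + b * q) (h0 : 0 ≤ r) (h1 : r < b) :
    a % b = r :=
  ((Int.ediv_emod_unique (by omega)).2 ⟨h.symm, h0, h1⟩).2

theorem Int.ediv_eq_of_eq_add_mul {a b q r : ℤ} (h : a = r + b * q) (h0 : 0 ≤ r) (h1 : r < b) :
    a / b = q :=
  ((Int.ediv_emod_unique (by omega)).2 ⟨h.symm, h0, h1⟩).1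

theorem Int.exists_eq_add_mul_of_pos {b : ℤ} (hb : 0 < b) (a : ℤ) :
    ∃ q r, a = r + b * q ∧ 0 ≤ r ∧ r < b :=
  ⟨a / b, a % b, (Int.emod_add_mul_ediv a b).symm, Int.emod_nonneg a hb.ne',
    Int.emod_lt_of_pos a hb⟩

def distToMultiple (M x : ℤ) : ℤ := min (x % M) (M - x % M)

theorem distToMultiple_of_eq_add_mul {M x q r : ℤ} (h : x = r + M * q) (h0 : 0 ≤ r) (h1 : r ≤ M) :
    distToMultiple M x = min r (M - r) := by
  rcases h1.lt_or_eq with h1 | rfl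
  · rw [distToMultiple, Int.emod_eq_of_eq_add_mul h h0 h1]
  · rw [distToMultiple, show x = r * (q + 1) by linear_combination h, Int.mul_emod_right,
      sub_zero, sub_self, min_comm]

theorem mul_sign_emod_eq_distToMultiple {M : ℤ} (hM : 0 < M) (x : ℤ) :
    x * (1 - 2 * ((x - 1) / M % 2)) % (2 * M) = distToMultiple (2 * M) x := by
  obtain ⟨s, t, hx, ht0, ht⟩ := Int.exists_eq_add_mul_of_pos (by omega : 0 < 2 * M) (x - 1)
  rw [distToMultiple_of_eq_add_mul (q := s) (r := t + 1) (by linear_combination hx) (by omega)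
    (by omega)]
  rcases lt_or_ge t M with htM | htM
  · rw [Int.ediv_eq_of_eq_add_mul (q := 2 * s) (r := t) (by linear_combination hx) ht0 htM,
      show 2 * s % 2 = 0 by omega, mul_zero, sub_zero, mul_one,
      Int.emod_eq_of_eq_add_mul (q := s) (r := t + 1) (by linear_combination hx) (by omega)
        (by omega)]
    grind
  · rw [Int.ediv_eq_of_eq_add_mul (q := 2 * s + 1) (r := t - M) (by linear_combination hx)
        (by omega) (by omega),
      show (2 * s + 1) % 2 = 1 by omega, show x * (1 - 2 * 1) = -x by ring,
      Int.emod_eq_of_eq_add_mul (q := -s - 1) (r := 2 * M - (t + 1)) (by linear_combination -hx)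
        (by omega) (by omega)]
    grind

theorem distToMultiple_add_one_sub {M : ℤ} (hM : 0 < M) (x : ℤ) :
    distToMultiple (2 * M) (x + 1) - distToMultiple (2 * M) x = 1 - 2 * (x / M % 2) := by
  obtain ⟨s, t, hx, ht0, ht⟩ := Int.exists_eq_add_mul_of_pos (by omega : 0 < 2 * M) x
  rw [distToMultiple_of_eq_add_mul hx ht0 ht.le,
    distToMultiple_of_eq_add_mul (q := s) (r := t + 1) (by linear_combination hx) (by omega) ht]
  rcases lt_or_ge t M with htM | htM
  · rw [Int.ediv_eq_of_eq_add_mul (q := 2 * s) (r := t) (by linear_combination hx) ht0 htM]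
    grind
  · rw [Int.ediv_eq_of_eq_add_mul (q := 2 * s + 1) (r := t - M) (by linear_combination hx)
      (by omega) (by omega)]
    grind

theorem f_add_one_eq_distToMultiple (i : ℤ) (d : ℕ) :
    f i (d + 1) = distToMultiple (2 ^ (d + 1)) i := by
  rw [f, Nat.add_sub_cancel, pow_succ', mul_sign_emod_eq_distToMultiple (by positivity)]

theorem S_add_one_sub (i : ℤ) (n : ℕ) :
    S (i + 1) n - S i n = ∑ d ∈ range n, (1 - 2 * (i / 2 ^ d % 2)) := by
  induction n with
  | zero => simp [S]
  | succ n ih =>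
    rw [sum_range_succ, ← ih, ← distToMultiple_add_one_sub (by positivity), ← pow_succ',
      ← f_add_one_eq_distToMultiple, ← f_add_one_eq_distToMultiple]
    simp only [S, sum_Icc_succ_top (Nat.le_add_left 1 n)]
    ring

theorem S_natCast_add_one_sub (j n : ℕ) :
    S (j + 1) n - S j n =
      #{d ∈ range n | j.testBit d = false} - #{d ∈ range n | j.testBit d = true} := by
  have hbit (d : ℕ) : (1 - 2 * ((j : ℤ) / 2 ^ d % 2)) = if j.testBit d = true then -1 else 1 := by
    have : (j : ℤ) / 2 ^ d % 2 = (j.testBit d).toNat := by rw [Nat.toNat_testBit]; push_cast; rfl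
    cases h : j.testBit d <;> simp [this, h]
  rw [S_add_one_sub, sum_congr rfl fun d _ => hbit d, sum_ite]
  simp only [sum_const, smul_neg, nsmul_eq_mul, mul_one, Bool.not_eq_true]
  ring

theorem Finset.natCast_card_sub_natCast_card {α : Type*} [DecidableEq α] (s t : Finset α) :
    (#t : ℤ) - #s = #(t \ s) - #(s \ t) := by
  have hs := card_sdiff_add_card_inter s t
  have ht := card_sdiff_add_card_inter t s
  rw [inter_comm] at ht
  omega

theorem Nat.lt_xor_two_pow_iff {a d : ℕ} : a < a ^^^ 2 ^ d ↔ a.testBit d = false := by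
  have hd : (a ^^^ 2 ^ d).testBit d = !a.testBit d := by simp [Nat.testBit_xor]
  have hhigh (j : ℕ) (hj : d < j) : a.testBit j = (a ^^^ 2 ^ d).testBit j := by
    simp [Nat.testBit_xor, hj.ne]
  cases ha : a.testBit d
  · simpa using Nat.lt_of_testBit d ha (by simp [hd, ha]) hhigh
  · simpa using (Nat.lt_of_testBit d (by simp [hd, ha]) ha fun j hj => (hhigh j hj).symm).le

theorem Nat.xor_two_pow_injective (a : ℕ) : Function.Injective fun d => a ^^^ 2 ^ d :=
  Nat.xor_right_injective.comp (Nat.pow_right_injective le_rfl)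

open scoped Classical in
noncomputable def crossingEdges (n : ℕ) (i : ℤ) : Finset (ℕ × ℕ) :=
  (Finset.range (2 ^ n) ×ˢ Finset.range (2 ^ n)).filter
    (fun ab => (ab.1 : ℤ) < i ∧ i ≤ (ab.2 : ℤ) ∧ ab.1 < ab.2 ∧ ∃ k : ℕ, ab.1 ^^^ ab.2 = 2 ^ k)

theorem mem_crossingEdges {n : ℕ} {i : ℤ} {a c : ℕ} :
    (a, c) ∈ crossingEdges n i ↔
      a < 2 ^ n ∧ a < i ∧ i ≤ c ∧ ∃ d < n, a.testBit d = false ∧ c = a ^^^ 2 ^ d := by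
  simp only [crossingEdges, mem_filter, mem_product, mem_range]
  constructor
  · rintro ⟨⟨ha, hc⟩, hai, hic, hac, d, hd⟩
    rw [xor_eq_iff_right_eq] at hd
    subst hd
    refine ⟨ha, hai, hic, d, ?_, Nat.lt_xor_two_pow_iff.1 hac, rfl⟩
    exact (Nat.pow_lt_pow_iff_right one_lt_two).1 (by simpa using Nat.xor_lt_two_pow ha hc)
  · rintro ⟨ha, hai, hic, d, hdn, hd, rfl⟩
    exact ⟨⟨ha, Nat.xor_lt_two_pow ha (Nat.pow_lt_pow_right one_lt_two hdn)⟩, hai, hic,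
      Nat.lt_xor_two_pow_iff.2 hd, d, xor_cancel_left a _⟩

theorem crossingEdges_zero (n : ℕ) : crossingEdges n 0 = ∅ := by
  ext ⟨a, c⟩
  simp only [mem_crossingEdges, notMem_empty, iff_false]
  omega

theorem crossingEdges_add_one_sdiff {n j : ℕ} (hj : j < 2 ^ n) :
    crossingEdges n (j + 1) \ crossingEdges n j =
      {d ∈ range n | j.testBit d = false}.image fun d => (j, j ^^^ 2 ^ d) := by
  ext ⟨a, c⟩
  simp only [mem_sdiff, mem_crossingEdges, mem_image, mem_filter, mem_range, Prod.mk.injEq]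
  constructor
  · rintro ⟨⟨ha, haj, hjc, d, hd, hbit, rfl⟩, hnot⟩
    have hac := Nat.lt_xor_two_pow_iff.2 hbit
    obtain rfl : a = j := by
      by_contra hne
      exact hnot ⟨ha, by omega, by omega, d, hd, hbit, rfl⟩
    exact ⟨d, ⟨hd, hbit⟩, rfl, rfl⟩
  · rintro ⟨d, ⟨hd, hbit⟩, rfl, rfl⟩
    have hac := Nat.lt_xor_two_pow_iff.2 hbit
    exact ⟨⟨hj, by omega, by omega, d, hd, hbit, rfl⟩, fun h => by omega⟩

theorem crossingEdges_sdiff_add_one {n j : ℕ} (hj : j < 2 ^ n) :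
    crossingEdges n j \ crossingEdges n (j + 1) =
      {d ∈ range n | j.testBit d = true}.image fun d => (j ^^^ 2 ^ d, j) := by
  ext ⟨a, c⟩
  simp only [mem_sdiff, mem_crossingEdges, mem_image, mem_filter, mem_range, Prod.mk.injEq]
  constructor
  · rintro ⟨⟨ha, haj, hjc, d, hd, hbit, rfl⟩, hnot⟩
    obtain rfl : a ^^^ 2 ^ d = j := by
      by_contra hne
      exact hnot ⟨ha, by omega, by omega, d, hd, hbit, rfl⟩
    exact ⟨d, ⟨hd, by simp [Nat.testBit_xor, hbit]⟩, xor_cancel_right a _, rfl⟩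
  · rintro ⟨d, ⟨hd, hbit⟩, rfl, rfl⟩
    have hbit' : (j ^^^ 2 ^ d).testBit d = false := by simp [Nat.testBit_xor, hbit]
    have hlt := Nat.lt_xor_two_pow_iff.2 hbit'
    rw [xor_cancel_right] at hlt
    exact ⟨⟨Nat.xor_lt_two_pow hj (Nat.pow_lt_pow_right one_lt_two hd), by omega, le_rfl, d, hd,
      hbit', (xor_cancel_right j _).symm⟩, fun h => by omega⟩

theorem card_crossingEdges_add_one_sub {n j : ℕ} (hj : j < 2 ^ n) :
    (#(crossingEdges n (j + 1)) : ℤ) - #(crossingEdges n j) =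
      #{d ∈ range n | j.testBit d = false} - #{d ∈ range n | j.testBit d = true} := by
  rw [natCast_card_sub_natCast_card, crossingEdges_add_one_sdiff hj,
    crossingEdges_sdiff_add_one hj,
    card_image_of_injective _ fun _ _ h => Nat.xor_two_pow_injective j (Prod.mk.inj h).2,
    card_image_of_injective _ fun _ _ h => Nat.xor_two_pow_injective j (Prod.mk.inj h).1]

theorem S_natCast_eq_card_crossingEdges {n j : ℕ} (hj : j ≤ 2 ^ n) :
    S j n = #(crossingEdges n j) := by
  induction j with
  | zero => simp [S, f, crossingEdges_zero]
  | succ j ih =>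
    have hS := S_natCast_add_one_sub j n
    have hcard := card_crossingEdges_add_one_sub (n := n) (j := j) (by omega)
    push_cast
    linarith [ih (by omega)]

open scoped Classical in
theorem S_counts_crossing_edges_general (n : ℕ) (i : ℤ) (hi0 : 0 ≤ i) (hiN : i ≤ 2 ^ n) :
    S i n = ((Finset.range (2 ^ n) ×ˢ Finset.range (2 ^ n)).filter
      (fun ab => (ab.1 : ℤ) < i ∧ i ≤ (ab.2 : ℤ) ∧ ab.1 < ab.2 ∧
        ∃ k : ℕ, ab.1 ^^^ ab.2 = 2 ^ k)).card := by
  lift i to ℕ using hi0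
  exact S_natCast_eq_card_crossingEdges (by exact_mod_cast hiN)

open scoped Classical in
theorem S_counts_crossing_edges (n : ℕ) (hn : 1 ≤ n) (i : ℤ) (hi0 : 0 ≤ i) (hiN : i ≤ 2 ^ n) :
    S i n = ((Finset.range (2 ^ n) ×ˢ Finset.range (2 ^ n)).filter
      (fun ab => (ab.1 : ℤ) < i ∧ i ≤ (ab.2 : ℤ) ∧ ab.1 < ab.2 ∧
        ∃ k : ℕ, ab.1 ^^^ ab.2 = 2 ^ k)).card :=
  S_counts_crossing_edges_general n i hi0 hiN
end
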